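/- arXiv:math/0410031 — 5 statements merged into one kernel-verified Lean document; each statement's English description precedes it below -/
import Mathlib

section
/- Let H be a real Hilbert space and let H^ℂ denote H × H with the orthogonal complex structure J(x,y) = (-y, x). If L is a Lagrangian subspace of H^ℂ with L ∩ ({0} × H) = {0}, then L is the graph of a densely defined self-adjoint operator A : D ⊆ H → H, i.e., there exists a dense subspace D of H and a self-adjoint operator A with domain D such that L = {(x, A x) : x ∈ D}. -/
open scoped RealInnerProductSpace

/-- The orthogonal complement of a subspace of `H × H` with respect to the product inner
product `⟪(x₁,y₁),(x₂,y₂)⟫ = ⟪x₁,x₂⟫ + ⟪y₁,y₂⟫`. -/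
def prodOrthogonal {H : Type*} [NormedAddCommGroup H] [InnerProductSpace ℝ H]
    (L : Submodule ℝ (H × H)) : Submodule ℝ (H × H) where
  carrier := {v | ∀ u ∈ L, ⟪u.1, v.1⟫ + ⟪u.2, v.2⟫ = (0 : ℝ)}
  add_mem' := fun {a b} ha hb u hu => by
    have h1 := ha u hu
    have h2 := hb u hu
    simp only [Prod.fst_add, Prod.snd_add, inner_add_right]
    linarith
  zero_mem' := fun u hu => by simp
  smul_mem' := fun c a ha u hu => by
    have h1 := ha u hu
    simp only [Prod.smul_fst, Prod.smul_snd, inner_smul_right]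
    rw [← mul_add, h1, mul_zero]
    
/-- The orthogonal complex structure `J(x, y) = (-y, x)` on `H × H`. -/
def Jprod (H : Type*) [NormedAddCommGroup H] [InnerProductSpace ℝ H] :
    (H × H) →ₗ[ℝ] (H × H) :=
  LinearMap.prod (-(LinearMap.snd ℝ H H)) (LinearMap.fst ℝ H H)

/-- A closed subspace `L ⊆ H^ℂ = H × H` is Lagrangian if `J(L) = Lᗮ` (orthogonal
complement with respect to the product inner product). -/
def IsLagrangianProd {H : Type*} [NormedAddCommGroup H] [InnerProductSpace ℝ H]
    (L : Submodule ℝ (H × H)) : Prop :=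
  IsClosed (L : Set (H × H)) ∧ L.map (Jprod H) = prodOrthogonal L

/-! Mathlib's `Submodule.adjoint` of a graph `L ⊆ H × H` is the annihilator of `L` under the
symplectic form `⟪b, x⟫ - ⟪a, y⟫`, so the Lagrangian condition `J(L) = Lᗮ` says exactly
`L.adjoint = L`. Since `L ∩ ({0} × H) = 0`, `L` is the graph of an operator `A`; a vector `y`
orthogonal to `dom A` gives `(0, y) ∈ L.adjoint = L`, so `y = 0` and `dom A` is dense. Then
`graph A† = (graph A).adjoint = L = graph A`. -/

namespace Submodule

theorem snd_eq_zero_of_inf_prod_bot_top_eq_bot {R M N : Type*} [Ring R] [AddCommGroup M]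
    [Module R M] [AddCommGroup N] [Module R N] {g : Submodule R (M × N)}
    (hg : g ⊓ (⊥ : Submodule R M).prod ⊤ = ⊥) (x : M × N) (hx : x ∈ g) (hx₁ : x.1 = 0) :
    x.2 = 0 := by
  have hx' : x ∈ g ⊓ (⊥ : Submodule R M).prod ⊤ := ⟨hx, mem_prod.2 ⟨hx₁, trivial⟩⟩
  rw [hg, mem_bot] at hx'
  simp [hx']

variable {𝕜 E F : Type*} [RCLike 𝕜] [NormedAddCommGroup E] [InnerProductSpace 𝕜 E]
  [NormedAddCommGroup F] [InnerProductSpace 𝕜 F]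

theorem zero_mk_mem_adjoint_iff (g : Submodule 𝕜 (E × F)) (y : E) :
    ((0 : F), y) ∈ g.adjoint ↔ y ∈ (g.map (LinearMap.fst 𝕜 E F))ᗮ := by
  simp only [mem_adjoint_iff, inner_zero_right, zero_sub, neg_eq_zero, mem_orthogonal, mem_map,
    LinearMap.fst_apply, Prod.exists, exists_and_right, exists_eq_right, forall_exists_index]

theorem dense_map_fst_iff [CompleteSpace E] (g : Submodule 𝕜 (E × F)) :
    Dense (g.map (LinearMap.fst 𝕜 E F) : Set E) ↔ ∀ y : E, ((0 : F), y) ∈ g.adjoint → y = 0 := by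
  simp_rw [dense_iff_topologicalClosure_eq_top, topologicalClosure_eq_top_iff, eq_bot_iff,
    zero_mk_mem_adjoint_iff, SetLike.le_def, mem_bot]

end Submodule

section Lagrangian

variable {H : Type*} [NormedAddCommGroup H] [InnerProductSpace ℝ H]

@[simp]
theorem Jprod_apply (v : H × H) : Jprod H v = (-v.2, v.1) := rfl

theorem mem_map_Jprod_iff (L : Submodule ℝ (H × H)) (v : H × H) :
    v ∈ L.map (Jprod H) ↔ (v.2, -v.1) ∈ L := by
  constructor
  · rintro ⟨u, hu, rfl⟩
    simpa using hu
  · exact fun hv ↦ ⟨_, hv, by simp⟩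

theorem mem_adjoint_iff_Jprod_mem_prodOrthogonal (L : Submodule ℝ (H × H)) (v : H × H) :
    v ∈ L.adjoint ↔ Jprod H v ∈ prodOrthogonal L := by
  simp only [Submodule.mem_adjoint_iff, Jprod_apply, prodOrthogonal, Submodule.mem_mk,
    AddSubmonoid.mem_mk, AddSubsemigroup.mem_mk, Set.mem_ofPred_eq, inner_neg_right, Prod.forall]
  refine forall₂_congr fun a b ↦ imp_congr_right fun _ ↦ ?_
  rw [sub_eq_zero, neg_add_eq_zero, eq_comm]

theorem adjoint_eq_self_of_map_Jprod_eq {L : Submodule ℝ (H × H)}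
    (hL : L.map (Jprod H) = prodOrthogonal L) : L.adjoint = L := by
  ext v
  rw [mem_adjoint_iff_Jprod_mem_prodOrthogonal, ← hL, mem_map_Jprod_iff]
  simp

end Lagrangian

/-- a Lagrangian `L ⊆ H^ℂ` with `L ∩ ({0} × H) = {0}` is the graph of a densely
defined self-adjoint operator on `H`. -/
theorem lagrangian_is_graph_of_selfAdjoint
    {H : Type*} [NormedAddCommGroup H] [InnerProductSpace ℝ H] [CompleteSpace H]
    (L : Submodule ℝ (H × H))
    (hL : IsLagrangianProd L)
    (hinter : L ⊓ (Submodule.prod (⊥ : Submodule ℝ H) (⊤ : Submodule ℝ H)) = ⊥) :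
    ∃ A : H →ₗ.[ℝ] H, Dense (A.domain : Set H) ∧ A.adjoint = A ∧ A.graph = L := by
  have hfunctional := Submodule.snd_eq_zero_of_inf_prod_bot_top_eq_bot hinter
  have hadj : L.adjoint = L := adjoint_eq_self_of_map_Jprod_eq hL.2
  have hdense : Dense (L.toLinearPMap.domain : Set H) :=
    (L.dense_map_fst_iff).2 fun y hy ↦ hfunctional (0, y) (hadj ▸ hy) rfl
  refine ⟨L.toLinearPMap, hdense, LinearPMap.eq_of_eq_graph ?_, L.toLinearPMap_graph_eq hfunctional⟩
  rw [LinearPMap.adjoint_graph_eq_graph_adjoint hdense, L.toLinearPMap_graph_eq hfunctional, hadj]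
end

section
/- Let V be a real Hilbert space equipped with an orthogonal complex structure J, and let L₀ and L₁ be Lagrangian subspaces of V with V = L₀ ⊕ L₁ (i.e., L₀ ∩ L₁ = {0} and L₀ + L₁ = V). Then the map ρ : L₁ → L₀ defined by ρ(y) = P_{L₀}(J y), where P_{L₀} is the orthogonal projection of V onto L₀, is a continuous linear bijection from L₁ onto L₀. -/
open scoped RealInnerProductSpace

/-- A closed subspace `L` of a real Hilbert space `V` equipped with an orthogonal complex
structure `J` is *Lagrangian* if `J(L) = Lᗮ`. -/
def IsLagrangian {V : Type*} [NormedAddCommGroup V] [InnerProductSpace ℝ V]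
    (J : V →L[ℝ] V) (L : Submodule ℝ V) : Prop :=
  IsClosed (L : Set V) ∧ L.map (J : V →ₗ[ℝ] V) = Lᗮ

/-!
Write `ρ = P_{L₀} ∘ J` on `L₁`. Since `J` is injective and `L₀ᗮ ⊆ J L₀`, `P_{L₀}(J y) = 0`
forces `y ∈ L₀`, so `ker ρ ⊆ L₀ ∩ L₁ = 0`.
For `x ∈ L₀` decompose `-J x = u + y` with `u ∈ L₀`, `y ∈ L₁`; then `J y = x - J u` with
`J u ∈ J L₀ ⊆ L₀ᗮ`, so `ρ y = x`.
-/

namespace Submodule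

variable {V : Type*} [NormedAddCommGroup V] [InnerProductSpace ℝ V]
  {J : V →L[ℝ] V} {L : Submodule ℝ V} [L.HasOrthogonalProjection]

theorem mem_of_orthogonalProjectionOnto_apply_eq_zero (hJ : Function.Injective J)
    (hL : Lᗮ ≤ L.map (J : V →ₗ[ℝ] V)) {v : V} (hv : L.orthogonalProjectionOnto (J v) = 0) :
    v ∈ L := by
  obtain ⟨u, hu, hJu⟩ := hL (L.orthogonalProjectionOnto_eq_zero_iff.mp hv)
  exact hJ hJu ▸ hu

theorem exists_mem_orthogonalProjectionOnto_apply_eq (hJ2 : ∀ x, J (J x) = -x)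
    (hL : L.map (J : V →ₗ[ℝ] V) ≤ Lᗮ) {M : Submodule ℝ V} (hsup : L ⊔ M = ⊤) (x : L) :
    ∃ y ∈ M, L.orthogonalProjectionOnto (J y) = x := by
  obtain ⟨u, hu, y, hy, huy⟩ := mem_sup.mp (hsup.symm ▸ mem_top : -J (x : V) ∈ L ⊔ M)
  have hJy : J y = x - J u := by
    rw [eq_sub_of_add_eq' huy, map_sub, map_neg, hJ2, neg_neg]
  have hJu : J u ∈ Lᗮ := hL ⟨u, hu, rfl⟩
  refine ⟨y, hy, ?_⟩
  rw [hJy, map_sub, orthogonalProjectionOnto_mem_subspace_eq_self,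
    orthogonalProjectionOnto_apply_of_mem_orthogonal hJu, sub_zero]

end Submodule

theorem rho_continuous_linear_bijective_general
    {V : Type*} [NormedAddCommGroup V] [InnerProductSpace ℝ V] [CompleteSpace V]
    (J : V →L[ℝ] V)
    (hJ2 : ∀ x, J (J x) = -x)
    (L₀ L₁ : Submodule ℝ V)
    (hL₀ : IsLagrangian J L₀)
    (hinf : L₀ ⊓ L₁ = ⊥) (hsup : L₀ ⊔ L₁ = ⊤) :
    haveI : CompleteSpace L₀ := hL₀.1.completeSpace_coe
    Continuous (fun y : L₁ => L₀.orthogonalProjectionOnto (J (y : V))) ∧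
      (∀ (y y' : L₁) (c : ℝ), L₀.orthogonalProjectionOnto (J ((y + c • y' : L₁) : V)) =
        L₀.orthogonalProjectionOnto (J (y : V)) + c • L₀.orthogonalProjectionOnto (J (y' : V))) ∧
      Function.Bijective (fun y : L₁ => L₀.orthogonalProjectionOnto (J (y : V))) := by
  have : CompleteSpace L₀ := hL₀.1.completeSpace_coe
  let ρ : L₁ →L[ℝ] L₀ := L₀.orthogonalProjectionOnto ∘L J ∘L L₁.subtypeL
  have hJ : Function.Injective J :=
    Function.LeftInverse.injective (g := fun x => -J x) fun x => by simp [hJ2]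
  have hρ : Function.Injective ρ := (injective_iff_map_eq_zero ρ).mpr fun y hy => by
    have hyL₀ := Submodule.mem_of_orthogonalProjectionOnto_apply_eq_zero hJ hL₀.2.ge hy
    simpa [hinf] using Submodule.mem_inf.mpr ⟨hyL₀, y.2⟩
  refine ⟨ρ.continuous, fun y y' c => by simp, hρ, fun x => ?_⟩
  obtain ⟨y, hy, hyx⟩ := 
    Submodule.exists_mem_orthogonalProjectionOnto_apply_eq hJ2 hL₀.2.le hsup x
  exact ⟨⟨y, hy⟩, hyx⟩

/-- for complementary Lagrangians `L₀, L₁`, the map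
`ρ : L₁ → L₀`, `ρ(y) = P_{L₀}(J y)` (orthogonal projection of `J y` onto `L₀`) is a
continuous linear bijection from `L₁` onto `L₀`. -/
theorem rho_continuous_linear_bijective
    {V : Type*} [NormedAddCommGroup V] [InnerProductSpace ℝ V] [CompleteSpace V]
    (J : V →L[ℝ] V)
    (hJ2 : ∀ x, J (J x) = -x)
    (hJorth : ∀ x y : V, ⟪J x, J y⟫ = ⟪x, y⟫)
    (L₀ L₁ : Submodule ℝ V)
    (hL₀ : IsLagrangian J L₀) (hL₁ : IsLagrangian J L₁)
    (hinf : L₀ ⊓ L₁ = ⊥) (hsup : L₀ ⊔ L₁ = ⊤) :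
    haveI : CompleteSpace L₀ := hL₀.1.completeSpace_coe
    Continuous (fun y : L₁ => L₀.orthogonalProjectionOnto (J (y : V))) ∧
      (∀ (y y' : L₁) (c : ℝ), L₀.orthogonalProjectionOnto (J ((y + c • y' : L₁) : V)) =
        L₀.orthogonalProjectionOnto (J (y : V)) + c • L₀.orthogonalProjectionOnto (J (y' : V))) ∧
      Function.Bijective (fun y : L₁ => L₀.orthogonalProjectionOnto (J (y : V))) :=
  rho_continuous_linear_bijective_general J hJ2 L₀ L₁ hL₀ hinf hsup
end

section
/- Let V be a real Hilbert space equipped with an orthogonal complex structure J, let S be a closed isotropic subspace of V (i.e., J(S) ⊆ Sᗮ), set V₁ = S ⊕ J(S) and V₂ = V₁ᗮ. If L is a Lagrangian subspace of V containing S, then P_{V₁}(L) = S and L = S ⊕ P_{V₂}(L), where P_{V₁} and P_{V₂} are the orthogonal projections onto V₁ and V₂; moreover P_{V₂}(L) = L ∩ V₂ is a Lagrangian subspace of V₂. -/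
/-!
Every `x ∈ L` is orthogonal to `J(S) ⊆ J(L) = Lᗮ`, so its projection onto `V₁ = S ⊕ J(S)` is
its projection onto `S`. Hence `P_{V₁}` maps `L` onto `S ⊆ L`; so `L` is invariant under `P_{V₁}`
and `P_{V₂} = 1 - P_{V₁}`, and it splits as `(L ∩ V₁) ⊕ (L ∩ V₂) = S ⊕ (L ∩ V₂)`. As `J` is
skew-adjoint, `V₂` is `J`-invariant, and a vector of `V₂` orthogonal to `L ∩ V₂` is orthogonal to
all of `L`, hence lies in `J(L)`.
-/

open scoped RealInnerProductSpace

/-- A subspace `L` of a closed `J`-invariant subspace `W` is *Lagrangian in `W`* if it is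
closed and `J(L)` equals the orthogonal complement of `L` taken inside `W`. -/
def IsLagrangianIn {V : Type*} [NormedAddCommGroup V] [InnerProductSpace ℝ V]
    (J : V →L[ℝ] V) (W L : Submodule ℝ V) : Prop :=
  IsClosed (L : Set V) ∧ L ≤ W ∧ L.map (J : V →ₗ[ℝ] V) = Lᗮ ⊓ W

namespace Submodule

variable {𝕜 E : Type*} [RCLike 𝕜] [NormedAddCommGroup E] [InnerProductSpace 𝕜 E]

theorem coe_map_starProjection (K L : Submodule 𝕜 E) [K.HasOrthogonalProjection] :
    (L.map (K.starProjection : E →ₗ[𝕜] E) : Set E) = {p | p ∈ K ∧ ∃ x ∈ L, x - p ∈ Kᗮ} := by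
  ext p
  constructor
  · rintro ⟨x, hx, rfl⟩
    exact ⟨K.starProjection_apply_mem x, x, hx, K.sub_starProjection_mem_orthogonal x⟩
  · rintro ⟨hp, x, hx, hxp⟩
    exact ⟨x, hx, eq_starProjection_of_mem_orthogonal hp hxp⟩

theorem IsOrtho.sub_starProjection_sub_starProjection_mem_orthogonal_sup {U W : Submodule 𝕜 E}
    [U.HasOrthogonalProjection] [W.HasOrthogonalProjection] (h : U ⟂ W) (v : E) :
    v - U.starProjection v - W.starProjection v ∈ (U ⊔ W)ᗮ := by
  rw [← inf_orthogonal, mem_inf]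
  constructor
  · exact sub_mem (U.sub_starProjection_mem_orthogonal v) (h.symm (W.starProjection_apply_mem v))
  · rw [sub_right_comm]
    exact sub_mem (W.sub_starProjection_mem_orthogonal v) (h (U.starProjection_apply_mem v))

theorem IsOrtho.hasOrthogonalProjection_sup {U W : Submodule 𝕜 E} [U.HasOrthogonalProjection]
    [W.HasOrthogonalProjection] (h : U ⟂ W) : (U ⊔ W).HasOrthogonalProjection :=
  ⟨fun v ↦ ⟨U.starProjection v + W.starProjection v,
    add_mem_sup (U.starProjection_apply_mem v) (W.starProjection_apply_mem v),
    sub_add_eq_sub_sub v _ _ ▸ h.sub_starProjection_sub_starProjection_mem_orthogonal_sup v⟩⟩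

theorem IsOrtho.starProjection_sup_apply {U W : Submodule 𝕜 E} [U.HasOrthogonalProjection]
    [W.HasOrthogonalProjection] [(U ⊔ W).HasOrthogonalProjection] (h : U ⟂ W) (v : E) :
    (U ⊔ W).starProjection v = U.starProjection v + W.starProjection v :=
  eq_starProjection_of_mem_orthogonal
    (add_mem_sup (U.starProjection_apply_mem v) (W.starProjection_apply_mem v))
    (sub_add_eq_sub_sub v _ _ ▸ h.sub_starProjection_sub_starProjection_mem_orthogonal_sup v)

theorem IsOrtho.map_starProjection_sup_eq {U W L : Submodule 𝕜 E} [U.HasOrthogonalProjection]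
    [W.HasOrthogonalProjection] [(U ⊔ W).HasOrthogonalProjection] (h : U ⟂ W) (hUL : U ≤ L)
    (hLW : L ⟂ W) : L.map ((U ⊔ W).starProjection : E →ₗ[𝕜] E) = U := by
  refine le_antisymm ?_ fun u hu ↦ ⟨u, hUL hu, starProjection_eq_self_iff.mpr (mem_sup_left hu)⟩
  rintro _ ⟨x, hx, rfl⟩
  have hWx : W.starProjection x = 0 := W.starProjection_apply_eq_zero_iff.mpr (hLW hx)
  show (U ⊔ W).starProjection x ∈ U
  rw [h.starProjection_sup_apply, hWx, add_zero]
  exact U.starProjection_apply_mem x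

variable {K L : Submodule 𝕜 E} [K.HasOrthogonalProjection]

theorem map_starProjection_eq_inf (hKL : L.map (K.starProjection : E →ₗ[𝕜] E) ≤ L) :
    L.map (K.starProjection : E →ₗ[𝕜] E) = L ⊓ K := by
  refine le_inf hKL ?_ |>.antisymm fun x hx ↦ ⟨x, hx.1, starProjection_eq_self_iff.mpr hx.2⟩
  rintro _ ⟨x, -, rfl⟩
  exact K.starProjection_apply_mem x

theorem map_starProjection_orthogonal_le (hKL : L.map (K.starProjection : E →ₗ[𝕜] E) ≤ L) :
    L.map (Kᗮ.starProjection : E →ₗ[𝕜] E) ≤ L := by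
  rintro _ ⟨x, hx, rfl⟩
  simpa using L.sub_mem hx (hKL ⟨x, hx, rfl⟩)

theorem inf_sup_inf_orthogonal (hKL : L.map (K.starProjection : E →ₗ[𝕜] E) ≤ L) :
    (L ⊓ K) ⊔ (L ⊓ Kᗮ) = L := by
  refine le_antisymm (sup_le inf_le_left inf_le_left) fun x hx ↦ ?_
  rw [← map_starProjection_eq_inf hKL, ← map_starProjection_eq_inf
    (map_starProjection_orthogonal_le hKL)]
  exact mem_sup.mpr ⟨_, ⟨x, hx, rfl⟩, _, ⟨x, hx, rfl⟩, by simp⟩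

end Submodule

section SquareNegOne

variable {R M : Type*} [Ring R] [AddCommGroup M] [Module R M] {J : M →ₗ[R] M}

theorem Submodule.map_map_of_apply_apply_eq_neg (hJ2 : ∀ x, J (J x) = -x) (S : Submodule R M) :
    (S.map J).map J = S := by
  have hJJ : J ∘ₗ J = -LinearMap.id := LinearMap.ext hJ2
  rw [← Submodule.map_comp, hJJ, Submodule.map_neg, Submodule.map_id]

theorem Submodule.map_eq_comap_of_apply_apply_eq_neg (hJ2 : ∀ x, J (J x) = -x)
    (S : Submodule R M) : S.map J = S.comap J := by
  refine le_antisymm ?_ ?_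
  · rw [← Submodule.map_le_iff_le_comap, S.map_map_of_apply_apply_eq_neg hJ2]
  · calc S.comap J = ((S.comap J).map J).map J := (map_map_of_apply_apply_eq_neg hJ2 _).symm
      _ ≤ S.map J := Submodule.map_mono (Submodule.map_comap_le _ _)

theorem Submodule.map_sup_map_le_of_apply_apply_eq_neg (hJ2 : ∀ x, J (J x) = -x)
    (S : Submodule R M) : (S ⊔ S.map J).map J ≤ S ⊔ S.map J := by
  rw [Submodule.map_sup, S.map_map_of_apply_apply_eq_neg hJ2, sup_comm]

theorem Submodule.isClosed_map_of_apply_apply_eq_neg [TopologicalSpace M] {J : M →L[R] M}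
    (hJ2 : ∀ x, J (J x) = -x) {S : Submodule R M} (hS : IsClosed (S : Set M)) :
    IsClosed (S.map (J : M →ₗ[R] M) : Set M) := by
  rw [S.map_eq_comap_of_apply_apply_eq_neg hJ2, Submodule.comap_coe]
  exact hS.preimage J.continuous

end SquareNegOne

section ComplexStructure

variable {V : Type*} [NormedAddCommGroup V] [InnerProductSpace ℝ V] {J : V →L[ℝ] V}

theorem Submodule.map_orthogonal_le_of_map_le (hJ2 : ∀ x, J (J x) = -x)
    (hJorth : ∀ x y : V, ⟪J x, J y⟫ = ⟪x, y⟫) {K : Submodule ℝ V}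
    (hK : K.map (J : V →ₗ[ℝ] V) ≤ K) : Kᗮ.map (J : V →ₗ[ℝ] V) ≤ Kᗮ := by
  rintro _ ⟨y, hy, rfl⟩ k hk
  have hJk : ⟪J k, y⟫ = 0 := Submodule.inner_right_of_mem_orthogonal (hK ⟨k, hk, rfl⟩) hy
  calc ⟪k, J y⟫ = ⟪J k, J (J y)⟫ := (hJorth k (J y)).symm
    _ = 0 := by rw [hJ2, inner_neg_right, hJk, neg_zero]

theorem IsLagrangian.isLagrangianIn_inf (hJ2 : ∀ x, J (J x) = -x) {L W : Submodule ℝ V}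
    (hL : IsLagrangian J L) (hW : IsClosed (W : Set V)) (hJW : W.map (J : V →ₗ[ℝ] V) ≤ W)
    (hLW : L ≤ Wᗮ ⊔ (L ⊓ W)) : IsLagrangianIn J W (L ⊓ W) := by
  refine ⟨hL.1.inter hW, inf_le_right, le_antisymm ?_ ?_⟩
  · exact le_inf ((Submodule.map_mono inf_le_left).trans (hL.2.le.trans
      (Submodule.orthogonal_le inf_le_left))) ((Submodule.map_mono inf_le_right).trans hJW)
  · rintro y ⟨hyLW, hyW⟩
    have hyL : y ∈ Lᗮ := by
      refine Submodule.orthogonal_le hLW ?_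
      rw [← Submodule.inf_orthogonal]
      exact ⟨Submodule.le_orthogonal_orthogonal W hyW, hyLW⟩
    rw [← hL.2] at hyL
    obtain ⟨x, hxL, rfl⟩ := hyL
    have hxW : x ∈ W := by simpa [hJ2] using W.neg_mem (hJW ⟨J x, hyW, rfl⟩)
    exact ⟨x, ⟨hxL, hxW⟩, rfl⟩

end ComplexStructure

/-- let `S` be a closed isotropic subspace, `V₁ = S ⊕ J(S)`, `V₂ = V₁ᗮ`.
If `L` is a Lagrangian containing `S`, then `P_{V₁}(L) = S`, `P_{V₂}(L) = L ∩ V₂`, and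
`L = S ⊕ P_{V₂}(L)`; moreover `L ∩ V₂` is Lagrangian in `V₂`.  Here the image of a set under
an orthogonal projection `P_W` is encoded by its defining property:
`P_W(L) = {p ∈ W | ∃ x ∈ L, x - p ∈ Wᗮ}`. -/
theorem lagrangian_containing_isotropic
    {V : Type*} [NormedAddCommGroup V] [InnerProductSpace ℝ V] [CompleteSpace V]
    (J : V →L[ℝ] V)
    (hJ2 : ∀ x, J (J x) = -x)
    (hJorth : ∀ x y : V, ⟪J x, J y⟫ = ⟪x, y⟫)
    (S : Submodule ℝ V) (hSc : IsClosed (S : Set V))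
    (hSiso : S.map (J : V →ₗ[ℝ] V) ≤ Sᗮ)
    (V₁ V₂ : Submodule ℝ V)
    (hV₁ : V₁ = S ⊔ S.map (J : V →ₗ[ℝ] V)) (hV₂ : V₂ = V₁ᗮ)
    (L : Submodule ℝ V) (hL : IsLagrangian J L) (hSL : S ≤ L) :
    {p : V | p ∈ V₁ ∧ ∃ x ∈ L, x - p ∈ V₁ᗮ} = (S : Set V) ∧
    {q : V | q ∈ V₂ ∧ ∃ x ∈ L, x - q ∈ V₂ᗮ} = ((L ⊓ V₂ : Submodule ℝ V) : Set V) ∧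
    S ⊓ (L ⊓ V₂) = ⊥ ∧ L = S ⊔ (L ⊓ V₂) ∧
    IsLagrangianIn J V₂ (L ⊓ V₂) := by
  set T := S.map (J : V →ₗ[ℝ] V)
  subst hV₁ hV₂
  have hST : S ⟂ T := Submodule.isOrtho_iff_le.mpr hSiso |>.symm
  have : CompleteSpace S := hSc.completeSpace_coe
  have : CompleteSpace T := (S.isClosed_map_of_apply_apply_eq_neg hJ2 hSc).completeSpace_coe
  have := hST.hasOrthogonalProjection_sup
  have hLT : L ⟂ T := Submodule.isOrtho_iff_le.mpr (hL.2 ▸ Submodule.map_mono hSL) |>.symm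
  have hP₁ : L.map ((S ⊔ T).starProjection : V →ₗ[ℝ] V) = S :=
    hST.map_starProjection_sup_eq hSL hLT
  have hred : L.map ((S ⊔ T).starProjection : V →ₗ[ℝ] V) ≤ L := hP₁.le.trans hSL
  have hP₂ : L.map ((S ⊔ T)ᗮ.starProjection : V →ₗ[ℝ] V) = L ⊓ (S ⊔ T)ᗮ :=
    Submodule.map_starProjection_eq_inf (Submodule.map_starProjection_orthogonal_le hred)
  have hdecomp : S ⊔ (L ⊓ (S ⊔ T)ᗮ) = L := by
    simpa only [← Submodule.map_starProjection_eq_inf hred, hP₁]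
      using Submodule.inf_sup_inf_orthogonal hred
  refine ⟨by rw [← Submodule.coe_map_starProjection, hP₁],
    by rw [← Submodule.coe_map_starProjection, hP₂],
    disjoint_iff.mp ((Submodule.orthogonal_disjoint _).mono le_sup_left inf_le_right),
    hdecomp.symm, ?_⟩
  have hJV₂ : (S ⊔ T)ᗮ.map (J : V →ₗ[ℝ] V) ≤ (S ⊔ T)ᗮ :=
    Submodule.map_orthogonal_le_of_map_le hJ2 hJorth (S.map_sup_map_le_of_apply_apply_eq_neg hJ2)
  refine hL.isLagrangianIn_inf hJ2 (Submodule.isClosed_orthogonal _) hJV₂ ?_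
  exact hdecomp.symm.le.trans
    (sup_le_sup_right (le_sup_left.trans (Submodule.le_orthogonal_orthogonal _)) _)
end

section
/- Let V be a real Hilbert space equipped with an orthogonal complex structure J, and let L₁ be a Lagrangian subspace of V. Then the set of Lagrangian subspaces of V complementary to L₁ is open in the operator-norm topology on orthogonal projections: if L is a Lagrangian complementary to L₁, then there exists ε > 0 such that every Lagrangian L' with ‖P_{L'} - P_L‖ < ε is also complementary to L₁. -/
open scoped RealInnerProductSpace

/-- The orthogonal projection onto a closed subspace `L` of a real Hilbert space, as a
continuous linear operator `V →L[ℝ] V`. -/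
noncomputable def orthProjCLM {V : Type*} [NormedAddCommGroup V] [InnerProductSpace ℝ V]
    [CompleteSpace V] (L : Submodule ℝ V) (h : IsClosed (L : Set V)) : V →L[ℝ] V :=
  haveI : CompleteSpace L := h.completeSpace_coe
  L.subtypeL.comp (L.orthogonalProjectionOnto)

/-! If `L₁ ⊕ L = V` with both summands closed, the oblique projection `E` onto `L₁` along `L`
is bounded, and `E + E† - 1` inverts `P_{L₁} - P_L`: both operators are self-adjoint, so a right
inverse is already two-sided. Invertible operators form an open set, and invertibility of
`P_{L₁} - P_{L'}` forces `L₁ ∩ L' = 0` (injectivity) and `L₁ + L' = V` (surjectivity, as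
`P_{L₁} x - P_{L'} x ∈ L₁ + L'`). -/

theorem IsSelfAdjoint.isUnit_of_mul_eq_one {R : Type*} [Monoid R] [StarMul R] {a b : R}
    (ha : IsSelfAdjoint a) (hb : IsSelfAdjoint b) (hab : a * b = 1) : IsUnit a := by
  have hba : b * a = 1 := by simpa [ha.star_eq, hb.star_eq] using congrArg star hab
  exact ⟨⟨a, b, hab, hba⟩, rfl⟩

namespace Submodule

open ContinuousLinearMap

variable {𝕜 E : Type*} [RCLike 𝕜] [NormedAddCommGroup E] [InnerProductSpace 𝕜 E]
  {K M : Submodule 𝕜 E} [K.HasOrthogonalProjection] [M.HasOrthogonalProjection]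

theorem isCompl_of_isUnit_starProjection_sub
    (hu : IsUnit (K.starProjection - M.starProjection)) : IsCompl K M := by
  obtain ⟨b, hb⟩ := hu.exists_left_inv
  obtain ⟨c, hc⟩ := hu.exists_right_inv
  constructor
  · refine disjoint_def.2 fun x hxK hxM => ?_
    calc x = (b * (K.starProjection - M.starProjection)) x := by rw [hb]; rfl
      _ = 0 := by
        simp [starProjection_eq_self_iff.2 hxK, starProjection_eq_self_iff.2 hxM]
  · refine codisjoint_iff_exists_add_eq.2 fun v =>
      ⟨K.starProjection (c v), -M.starProjection (c v), starProjection_apply_mem _ _,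
        neg_mem (starProjection_apply_mem _ _), ?_⟩
    calc K.starProjection (c v) + -M.starProjection (c v)
        = ((K.starProjection - M.starProjection) * c) v := by simp [sub_eq_add_neg]
      _ = v := by rw [hc]; rfl

variable [CompleteSpace E]

theorem IsTopCompl.starProjection_sub_mul_eq_one (h : IsTopCompl K M) :
    (K.starProjection - M.starProjection) *
      (K.projectionL M h + star (K.projectionL M h) - 1) = 1 := by
  set P := K.projectionL M h
  have hKP : K.starProjection * P = P := by
    ext x; exact starProjection_eq_self_iff.2 (projectionL_apply_mem h x)
  have hMP : M.starProjection * P = M.starProjection - 1 + P := by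
    ext x
    have hx : M.starProjection (x - P x) = x - P x :=
      starProjection_eq_self_iff.2 (sub_projection_mem h.isCompl x)
    simp only [mul_apply_eq_comp, add_apply, sub_apply, one_apply_eq_self, map_sub] at hx ⊢
    rw [← sub_sub_cancel (M.starProjection x) (M.starProjection (P x)), hx]
    abel
  have hPK : P * K.starProjection = K.starProjection := by
    ext x; exact projectionL_apply_left h ⟨_, starProjection_apply_mem K x⟩
  have hPM : P * M.starProjection = 0 := by
    ext x; exact projectionL_apply_right h ⟨_, starProjection_apply_mem M x⟩
  have hKP' : K.starProjection * star P = K.starProjection := by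
    simpa [(isSelfAdjoint_starProjection K).star_eq] using congrArg star hPK
  have hMP' : M.starProjection * star P = 0 := by
    simpa [(isSelfAdjoint_starProjection M).star_eq] using congrArg star hPM
  simp only [sub_mul, mul_sub, mul_add, mul_one, hKP, hMP, hKP', hMP']
  abel

theorem IsTopCompl.isUnit_starProjection_sub (h : IsTopCompl K M) :
    IsUnit (K.starProjection - M.starProjection) :=
  ((isSelfAdjoint_starProjection K).sub (isSelfAdjoint_starProjection M)).isUnit_of_mul_eq_one
    ((IsSelfAdjoint.add_star_self _).sub (.one _)) h.starProjection_sub_mul_eq_one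

theorem IsTopCompl.exists_forall_isCompl_of_norm_starProjection_sub_lt (h : IsTopCompl K M) :
    ∃ ε > 0, ∀ (M' : Submodule 𝕜 E) [M'.HasOrthogonalProjection],
      ‖M'.starProjection - M.starProjection‖ < ε → IsCompl K M' := by
  obtain ⟨ε, hε, hball⟩ :=
    Metric.mem_nhds_iff.1 (Units.isOpen.mem_nhds h.isUnit_starProjection_sub)
  refine ⟨ε, hε, fun M' _ hM' => isCompl_of_isUnit_starProjection_sub (hball ?_)⟩
  rwa [Metric.mem_ball, dist_eq_norm, sub_sub_sub_cancel_left, norm_sub_rev]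

end Submodule

theorem open_complementary_lagrangians_general
    {V : Type*} [NormedAddCommGroup V] [InnerProductSpace ℝ V] [CompleteSpace V]
    (J : V →L[ℝ] V)
    (L₁ L : Submodule ℝ V)
    (hL₁ : IsLagrangian J L₁) (hL : IsLagrangian J L)
    (hinf : L₁ ⊓ L = ⊥) (hsup : L₁ ⊔ L = ⊤) :
    ∃ ε : ℝ, 0 < ε ∧
      ∀ (L' : Submodule ℝ V) (hL' : IsLagrangian J L'),
        ‖orthProjCLM L' hL'.1 - orthProjCLM L hL.1‖ < ε →
          L₁ ⊓ L' = ⊥ ∧ L₁ ⊔ L' = ⊤ := by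
  have := hL₁.1.completeSpace_coe
  have := hL.1.completeSpace_coe
  have hcompl : L₁.IsTopCompl L :=
    Submodule.IsCompl.isTopCompl_of_isClosed ⟨disjoint_iff.2 hinf, codisjoint_iff.2 hsup⟩
      hL₁.1 hL.1
  obtain ⟨ε, hε, hnear⟩ := hcompl.exists_forall_isCompl_of_norm_starProjection_sub_lt
  refine ⟨ε, hε, fun L' hL' hL'L => ?_⟩
  have := hL'.1.completeSpace_coe
  have hcompl' := hnear L' hL'L
  exact ⟨hcompl'.inf_eq_bot, hcompl'.sup_eq_top⟩

/-- the set of Lagrangians complementary to a fixed Lagrangian `L₁` is open in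
the operator-norm topology on orthogonal projections: if `L` is complementary to `L₁`, there
is `ε > 0` such that every Lagrangian `L'` with `‖P_{L'} - P_L‖ < ε` is complementary to
`L₁`. -/
theorem open_complementary_lagrangians
    {V : Type*} [NormedAddCommGroup V] [InnerProductSpace ℝ V] [CompleteSpace V]
    (J : V →L[ℝ] V)
    (hJ2 : ∀ x, J (J x) = -x)
    (hJorth : ∀ x y : V, ⟪J x, J y⟫ = ⟪x, y⟫)
    (L₁ L : Submodule ℝ V)
    (hL₁ : IsLagrangian J L₁) (hL : IsLagrangian J L)
    (hinf : L₁ ⊓ L = ⊥) (hsup : L₁ ⊔ L = ⊤) :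
    ∃ ε : ℝ, 0 < ε ∧
      ∀ (L' : Submodule ℝ V) (hL' : IsLagrangian J L'),
        ‖orthProjCLM L' hL'.1 - orthProjCLM L hL.1‖ < ε →
          L₁ ⊓ L' = ⊥ ∧ L₁ ⊔ L' = ⊤ :=
  open_complementary_lagrangians_general J L₁ L hL₁ hL hinf hsup
end

section
/- Let V be a real Hilbert space equipped with an orthogonal complex structure J. Then V possesses at least one Lagrangian subspace, i.e., there exists a closed subspace L ⊆ V with J(L) = Lᗮ. -/
/-!
Zorn's lemma gives a maximal isotropic subspace `L` (one with `J(L) ⊥ L`); it is closed because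
the closure of an isotropic subspace is isotropic. If `w ⊥ J(L)`, then `L + ℝw` is still isotropic
(`⟪w, J w⟫ = 0` as `J` is skew-adjoint), so `w ∈ L` by maximality. Hence `Lᗮ ∩ J(L)ᗮ = 0`,
and since `J(L)` is a closed subspace of `Lᗮ`, it is all of `Lᗮ`.
-/

open scoped RealInnerProductSpace

section Isotropic

variable {V : Type*} [NormedAddCommGroup V] [InnerProductSpace ℝ V] {J : V →L[ℝ] V}

def IsIsotropic (J : V →L[ℝ] V) (L : Submodule ℝ V) : Prop :=
  ∀ x ∈ L, ∀ y ∈ L, ⟪x, J y⟫ = 0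

lemma inner_apply_eq_neg_inner_apply (hJ2 : ∀ x, J (J x) = -x)
    (hJorth : ∀ x y : V, ⟪J x, J y⟫ = ⟪x, y⟫) (x y : V) : ⟪x, J y⟫ = -⟪J x, y⟫ := by
  have := hJorth (J x) y
  rw [hJ2, inner_neg_left] at this
  linarith

lemma inner_self_apply_eq_zero (hJ2 : ∀ x, J (J x) = -x)
    (hJorth : ∀ x y : V, ⟪J x, J y⟫ = ⟪x, y⟫) (x : V) : ⟪x, J x⟫ = 0 := by
  have := inner_apply_eq_neg_inner_apply hJ2 hJorth x x
  rw [real_inner_comm x] at this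
  linarith

lemma map_eq_comap_of_apply_apply_eq_neg (hJ2 : ∀ x, J (J x) = -x) (L : Submodule ℝ V) :
    L.map (J : V →ₗ[ℝ] V) = L.comap (J : V →ₗ[ℝ] V) := by
  ext x
  constructor
  · rintro ⟨y, hy, rfl⟩
    simpa [hJ2] using hy
  · intro hx
    exact ⟨-J x, L.neg_mem hx, by simp [hJ2]⟩

lemma IsIsotropic.map_le_orthogonal {L : Submodule ℝ V} (hL : IsIsotropic J L) :
    L.map (J : V →ₗ[ℝ] V) ≤ Lᗮ := by
  rintro _ ⟨y, hy, rfl⟩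
  exact (L.mem_orthogonal _).2 fun x hx => hL x hx y hy

lemma IsIsotropic.topologicalClosure {L : Submodule ℝ V} (hL : IsIsotropic J L) :
    IsIsotropic J L.topologicalClosure := by
  have hclosed : IsClosed {p : V × V | ⟪p.1, J p.2⟫ = 0} :=
    isClosed_eq (by fun_prop) continuous_const
  have hsub : closure ((L : Set V) ×ˢ (L : Set V)) ⊆ _ :=
    closure_minimal (fun p hp => hL p.1 hp.1 p.2 hp.2) hclosed
  rw [closure_prod_eq] at hsub
  exact fun x hx y hy => hsub (Set.mk_mem_prod hx hy)

lemma IsIsotropic.sup_span_singleton (hJ2 : ∀ x, J (J x) = -x)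
    (hJorth : ∀ x y : V, ⟪J x, J y⟫ = ⟪x, y⟫) {L : Submodule ℝ V} (hL : IsIsotropic J L)
    {w : V} (hw : w ∈ (L.map (J : V →ₗ[ℝ] V))ᗮ) : IsIsotropic J (L ⊔ ℝ ∙ w) := by
  have hwJ : ∀ y ∈ L, ⟪w, J y⟫ = 0 := fun y hy => by
    rw [real_inner_comm]
    exact (Submodule.mem_orthogonal _ _).1 hw _ ⟨y, hy, rfl⟩
  have hJw : ∀ x ∈ L, ⟪x, J w⟫ = 0 := fun x hx => by
    rw [inner_apply_eq_neg_inner_apply hJ2 hJorth, real_inner_comm, hwJ x hx, neg_zero]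
  intro a ha b hb
  obtain ⟨x, hx, _, hx', rfl⟩ := Submodule.mem_sup.1 ha
  obtain ⟨y, hy, _, hy', rfl⟩ := Submodule.mem_sup.1 hb
  obtain ⟨s, rfl⟩ := Submodule.mem_span_singleton.1 hx'
  obtain ⟨t, rfl⟩ := Submodule.mem_span_singleton.1 hy'
  simp only [map_add, map_smul, inner_add_left, inner_add_right, real_inner_smul_left,
    real_inner_smul_right, hL x hx y hy, hJw x hx, hwJ y hy,
    inner_self_apply_eq_zero hJ2 hJorth w]
  ring

lemma exists_maximal_isIsotropic (J : V →L[ℝ] V) : ∃ L, Maximal (IsIsotropic J) L := by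
  obtain ⟨L, -, hL⟩ := zorn_le_nonempty₀ {L | IsIsotropic J L} (fun c hc hchain L₀ hL₀ => by
    refine ⟨sSup c, fun x hx y hy => ?_, fun _ => le_sSup⟩
    rw [Submodule.mem_sSup_of_directed ⟨L₀, hL₀⟩ hchain.directedOn] at hx hy
    obtain ⟨A, hA, hxA⟩ := hx
    obtain ⟨B, hB, hyB⟩ := hy
    rcases hchain.total hA hB with hAB | hBA
    · exact hc hB x (hAB hxA) y hyB
    · exact hc hA x hxA y (hBA hyB)) ⊥ (fun x hx y hy => by simp_all)
  exact ⟨L, hL⟩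

lemma isClosed_of_maximal_isIsotropic {L : Submodule ℝ V} (hL : Maximal (IsIsotropic J) L) :
    IsClosed (L : Set V) := by
  have hLeq := hL.eq_of_le hL.prop.topologicalClosure L.le_topologicalClosure
  exact hLeq ▸ L.isClosed_topologicalClosure

lemma orthogonal_inf_map_orthogonal_eq_bot (hJ2 : ∀ x, J (J x) = -x)
    (hJorth : ∀ x y : V, ⟪J x, J y⟫ = ⟪x, y⟫) {L : Submodule ℝ V}
    (hL : Maximal (IsIsotropic J) L) : Lᗮ ⊓ (L.map (J : V →ₗ[ℝ] V))ᗮ = ⊥ := by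
  refine eq_bot_iff.2 fun w ⟨hwL, hwJL⟩ => ?_
  have hsup := hL.eq_of_le (hL.prop.sup_span_singleton hJ2 hJorth hwJL) le_sup_left
  have hw : w ∈ L := hsup ▸ Submodule.mem_sup_right (Submodule.mem_span_singleton_self w)
  rw [← L.inf_orthogonal_eq_bot]
  exact ⟨hw, hwL⟩

end Isotropic

/-- every real Hilbert space with an orthogonal complex structure has a
Lagrangian subspace. -/
theorem exists_lagrangian {V : Type*} [NormedAddCommGroup V] [InnerProductSpace ℝ V]
    [CompleteSpace V] (J : V →L[ℝ] V)
    (hJ2 : ∀ x, J (J x) = -x)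
    (hJorth : ∀ x y : V, ⟪J x, J y⟫ = ⟪x, y⟫) :
    ∃ L : Submodule ℝ V, IsLagrangian J L := by
  obtain ⟨L, hL⟩ := exists_maximal_isIsotropic J
  have hLclosed := isClosed_of_maximal_isIsotropic hL
  have hJLclosed : IsClosed (L.map (J : V →ₗ[ℝ] V) : Set V) := by
    rw [map_eq_comap_of_apply_apply_eq_neg hJ2]
    exact hLclosed.preimage J.continuous
  have : CompleteSpace (L.map (J : V →ₗ[ℝ] V)) := hJLclosed.completeSpace_coe
  refine ⟨L, hLclosed, ?_⟩
  rw [← Submodule.sup_orthogonal_inf_of_hasOrthogonalProjection hL.prop.map_le_orthogonal,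
    inf_comm, orthogonal_inf_map_orthogonal_eq_bot hJ2 hJorth hL, sup_bot_eq]
end
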